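/- Let n be a positive integer with gcd(n, 10) = 1, and write n + 1 = d·2^s with d odd. Then n satisfies the strong Lucas condition with parameters (1,-1) (i.e., U_d(1,-1) ≡ 0 (mod n) or V_{d·2^r}(1,-1) ≡ 0 (mod n) for some 0 ≤ r < s) if and only if n satisfies the strong Lucas condition with parameters (5,5). -/

import Mathlib

/-
The roots of x² - 5x + 5 are √5 times those of x² - x - 1, up to sign. Concretely, taking every
other term turns the recurrences for (5,5) and (1,-1) into X_{k+4} = 15 X_{k+2} - 25 X_k and
X_{k+4} = 3 X_{k+2} - X_k, which differ by the scaling X_{2m+i} ↦ 5^m X_{2m+i}; comparing initial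
values gives U_{2k+1}(5,5) = 5^k V_{2k+1}(1,-1), V_{2k+1}(5,5) = 5^{k+1} U_{2k+1}(1,-1) and
V_{2k}(5,5) = 5^k V_{2k}(1,-1). Since n is prime to 5, each term of one strong Lucas condition
is divisible by n exactly when the corresponding term of the other is; the only difference is
that the terms U_d and V_d swap roles, and both occur because s ≥ 1 (n is odd).
-/

def lucasU (P Q : ℤ) : ℕ → ℤ
  | 0 => 0
  | 1 => 1
  | k + 2 => P * lucasU P Q (k + 1) - Q * lucasU P Q k

def lucasV (P Q : ℤ) : ℕ → ℤ
  | 0 => 2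
  | 1 => P
  | k + 2 => P * lucasV P Q (k + 1) - Q * lucasV P Q k

section LinearRecurrence

variable {R : Type*} [CommRing R]

theorem add_four_of_add_two {x : ℕ → R} {P Q : R}
    (hx : ∀ k, x (k + 2) = P * x (k + 1) - Q * x k) (k : ℕ) :
    x (k + 4) = (P ^ 2 - 2 * Q) * x (k + 2) - Q ^ 2 * x k := by
  linear_combination hx (k + 2) + P * hx (k + 1) + Q * hx k

theorem eq_mul_pow_mul_of_recurrence {f g : ℕ → R} {a p q c : R}
    (hf : ∀ m, f (m + 2) = p * a * f (m + 1) - q * a ^ 2 * f m)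
    (hg : ∀ m, g (m + 2) = p * g (m + 1) - q * g m)
    (h0 : f 0 = c * g 0) (h1 : f 1 = c * a * g 1) (m : ℕ) :
    f m = c * a ^ m * g m := by
  induction m using Nat.twoStepInduction with
  | zero => simpa using h0
  | one => simpa using h1
  | more m ih0 ih1 =>
    rw [hf, hg, ih0, ih1]
    ring

end LinearRecurrence

theorem lucasU_add_four (P Q : ℤ) (k : ℕ) :
    lucasU P Q (k + 4) = (P ^ 2 - 2 * Q) * lucasU P Q (k + 2) - Q ^ 2 * lucasU P Q k :=
  add_four_of_add_two (fun _ => rfl) k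

theorem lucasV_add_four (P Q : ℤ) (k : ℕ) :
    lucasV P Q (k + 4) = (P ^ 2 - 2 * Q) * lucasV P Q (k + 2) - Q ^ 2 * lucasV P Q k :=
  add_four_of_add_two (fun _ => rfl) k

theorem lucasU_five_five_odd (k : ℕ) :
    lucasU 5 5 (2 * k + 1) = 5 ^ k * lucasV 1 (-1) (2 * k + 1) := by
  simpa using eq_mul_pow_mul_of_recurrence
    (f := fun m => lucasU 5 5 (2 * m + 1)) (g := fun m => lucasV 1 (-1) (2 * m + 1))
    (a := 5) (p := 3) (q := 1) (c := 1)
    (fun m => by convert lucasU_add_four 5 5 (2 * m + 1) using 2 <;> ring_nf)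
    (fun m => by convert lucasV_add_four 1 (-1) (2 * m + 1) using 2 <;> ring_nf)
    (by rfl) (by rfl) k

theorem lucasV_five_five_odd (k : ℕ) :
    lucasV 5 5 (2 * k + 1) = 5 ^ (k + 1) * lucasU 1 (-1) (2 * k + 1) := by
  rw [pow_succ']
  exact eq_mul_pow_mul_of_recurrence
    (f := fun m => lucasV 5 5 (2 * m + 1)) (g := fun m => lucasU 1 (-1) (2 * m + 1))
    (a := 5) (p := 3) (q := 1) (c := 5)
    (fun m => by convert lucasV_add_four 5 5 (2 * m + 1) using 2 <;> ring_nf)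
    (fun m => by convert lucasU_add_four 1 (-1) (2 * m + 1) using 2 <;> ring_nf)
    (by rfl) (by rfl) k

theorem lucasV_five_five_mul_two (k : ℕ) :
    lucasV 5 5 (k * 2) = 5 ^ k * lucasV 1 (-1) (k * 2) := by
  simpa using eq_mul_pow_mul_of_recurrence
    (f := fun m => lucasV 5 5 (m * 2)) (g := fun m => lucasV 1 (-1) (m * 2))
    (a := 5) (p := 3) (q := 1) (c := 1)
    (fun m => by convert lucasV_add_four 5 5 (m * 2) using 2 <;> ring_nf)
    (fun m => by convert lucasV_add_four 1 (-1) (m * 2) using 2 <;> ring_nf)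
    (by rfl) (by rfl) k

theorem stmt_15_general (n : ℕ) (h10 : Nat.gcd n 10 = 1)
    (d s : ℕ) (hd : Odd d) (hds : n + 1 = d * 2 ^ s) :
    ((n : ℤ) ∣ lucasU 1 (-1) d ∨ ∃ r < s, (n : ℤ) ∣ lucasV 1 (-1) (d * 2 ^ r)) ↔
    ((n : ℤ) ∣ lucasU 5 5 d ∨ ∃ r < s, (n : ℤ) ∣ lucasV 5 5 (d * 2 ^ r)) := by
  obtain ⟨k, rfl⟩ := hd
  have hn_odd : Odd n :=
    Nat.coprime_two_right.mp (Nat.Coprime.coprime_dvd_right (by norm_num) h10)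
  obtain ⟨t, rfl⟩ : ∃ t, s = t + 1 := by
    refine Nat.exists_eq_add_one.mpr (Nat.pos_of_ne_zero fun hs => ?_)
    obtain ⟨m, rfl⟩ := hn_odd
    simp only [hs, pow_zero, mul_one] at hds
    omega
  have h5 : IsCoprime (n : ℤ) 5 :=
    Int.isCoprime_iff_gcd_eq_one.mpr (Nat.Coprime.coprime_dvd_right (by norm_num) h10)
  have dvd_pow_five_mul_iff (j : ℕ) (x : ℤ) : (n : ℤ) ∣ 5 ^ j * x ↔ (n : ℤ) ∣ x :=
    ⟨h5.pow_right.dvd_of_dvd_mul_left, (Dvd.dvd.mul_left · _)⟩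
  simp only [Nat.exists_lt_succ_left, pow_zero, mul_one, lucasU_five_five_odd,
    lucasV_five_five_odd, dvd_pow_five_mul_iff]
  simp only [pow_succ, ← mul_assoc, lucasV_five_five_mul_two, dvd_pow_five_mul_iff]
  tauto

theorem stmt_15 (n : ℕ) (hn : 0 < n) (h10 : Nat.gcd n 10 = 1)
    (d s : ℕ) (hd : Odd d) (hds : n + 1 = d * 2 ^ s) :
    ((n : ℤ) ∣ lucasU 1 (-1) d ∨ ∃ r < s, (n : ℤ) ∣ lucasV 1 (-1) (d * 2 ^ r)) ↔
    ((n : ℤ) ∣ lucasU 5 5 d ∨ ∃ r < s, (n : ℤ) ∣ lucasV 5 5 (d * 2 ^ r)) :=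
  stmt_15_general n h10 d s hd hds
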